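/- For every r > 0, λ ∈ (0,1), p₀ ∈ (0,1) and every integer n ≥ 1, the truncation error of f satisfies 0 < f(p₀) − Σ_{i=0}^n g_i(p₀) < g_n(p₀) · r(1−λp₀) / ((n + rλ)·p₀). -/

import Mathlib

open scoped BigOperators

/-- `g r lam i x = x · r^i (1−λx)^i / ∏_{j=1}^i (r + j·x)`; for `i = 0` this is `x`. -/
noncomputable def g (r lam : ℝ) (i : ℕ) (x : ℝ) : ℝ :=
  x * r ^ i * (1 - lam * x) ^ i / ∏ j ∈ Finset.Icc 1 i, (r + (j : ℝ) * x)

/-- `f r lam x = Σ_{i=0}^∞ g_i(x)`. -/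
noncomputable def f (r lam : ℝ) (x : ℝ) : ℝ := ∑' i : ℕ, g r lam i x

/-!
Consecutive terms satisfy `g_{i+1} = g_i · r(1 − λp₀) / (r + (i+1)p₀)`, so from index `n`
on the ratio is at most `q = r(1 − λp₀) / (r + (n+1)p₀) < 1`. Comparing with a geometric series
bounds the tail after `g_n` by `g_n · q / (1 − q) = g_n · r(1 − λp₀) / ((n + 1 + rλ)p₀)`,
which is strictly below the claimed bound; the tail is positive because every term is.
-/

section GeometricComparison

variable {u : ℕ → ℝ} {q : ℝ}

theorem summable_of_succ_le_mul (hu : ∀ k, 0 ≤ u k) (hq0 : 0 ≤ q) (hq1 : q < 1)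
    (h : ∀ k, u (k + 1) ≤ q * u k) : Summable u :=
  .of_nonneg_of_le hu (fun k => le_geom hq0 k fun k _ => h k)
    ((summable_geometric_of_lt_one hq0 hq1).mul_right (u 0))

theorem tsum_le_div_of_succ_le_mul (hu : ∀ k, 0 ≤ u k) (hq0 : 0 ≤ q) (hq1 : q < 1)
    (h : ∀ k, u (k + 1) ≤ q * u k) : ∑' k, u k ≤ u 0 / (1 - q) :=
  calc ∑' k, u k ≤ ∑' k, q ^ k * u 0 :=
        (summable_of_succ_le_mul hu hq0 hq1 h).tsum_le_tsum
          (fun k => le_geom hq0 k fun k _ => h k)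
          ((summable_geometric_of_lt_one hq0 hq1).mul_right (u 0))
    _ = u 0 / (1 - q) := by
        rw [tsum_mul_right, tsum_geometric_of_lt_one hq0 hq1, inv_mul_eq_div]

end GeometricComparison

section Terms

variable {r lam x : ℝ}

theorem prod_Icc_add_mul_pos (hr : 0 < r) (hx : 0 ≤ x) (i : ℕ) :
    0 < ∏ j ∈ Finset.Icc 1 i, (r + (j : ℝ) * x) :=
  Finset.prod_pos fun j _ => by positivity

theorem g_pos (hr : 0 < r) (hx : 0 < x) (hlx : lam * x < 1) (i : ℕ) : 0 < g r lam i x :=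
  div_pos (mul_pos (by positivity) (pow_pos (sub_pos.2 hlx) i)) (prod_Icc_add_mul_pos hr hx.le i)

theorem g_succ (hr : 0 < r) (hx : 0 ≤ x) (i : ℕ) :
    g r lam (i + 1) x = r * (1 - lam * x) / (r + (i + 1) * x) * g r lam i x := by
  have hprod := (prod_Icc_add_mul_pos hr hx i).ne'
  have hlast : r + ((i : ℝ) + 1) * x ≠ 0 := by positivity
  unfold g
  rw [Finset.prod_Icc_succ_top (Nat.le_add_left 1 i)]
  push_cast
  field_simp
  ring

theorem g_ratio_nonneg (hr : 0 < r) (hx : 0 ≤ x) (hlx : lam * x < 1) (n : ℕ) :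
    0 ≤ r * (1 - lam * x) / (r + (n + 1) * x) :=
  div_nonneg (mul_nonneg hr.le (sub_nonneg.2 hlx.le)) (by positivity)

theorem one_sub_g_ratio (hr : 0 < r) (hx : 0 ≤ x) (n : ℕ) :
    1 - r * (1 - lam * x) / (r + (n + 1) * x) = (n + 1 + r * lam) * x / (r + (n + 1) * x) := by
  have : r + ((n : ℝ) + 1) * x ≠ 0 := by positivity
  field_simp
  ring

theorem g_ratio_lt_one (hr : 0 < r) (hlam : 0 ≤ lam) (hx : 0 < x) (n : ℕ) :
    r * (1 - lam * x) / (r + (n + 1) * x) < 1 := by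
  rw [← sub_pos, one_sub_g_ratio hr hx.le]
  positivity

theorem g_add_succ_le_mul (hr : 0 < r) (hx : 0 < x) (hlx : lam * x < 1) (n k : ℕ) :
    g r lam (k + 1 + n) x ≤ r * (1 - lam * x) / (r + (n + 1) * x) * g r lam (k + n) x := by
  rw [add_right_comm, g_succ hr hx.le]
  have := g_pos hr hx hlx (k + n)
  gcongr
  linarith [(k.cast_nonneg : (0 : ℝ) ≤ k)]

theorem summable_g_add (hr : 0 < r) (hlam : 0 ≤ lam) (hx : 0 < x) (hlx : lam * x < 1) (n : ℕ) :
    Summable fun k => g r lam (k + n) x :=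
  summable_of_succ_le_mul (fun _ => (g_pos hr hx hlx _).le) (g_ratio_nonneg hr hx.le hlx n)
    (g_ratio_lt_one hr hlam hx n) (g_add_succ_le_mul hr hx hlx n)

theorem summable_g (hr : 0 < r) (hlam : 0 ≤ lam) (hx : 0 < x) (hlx : lam * x < 1) :
    Summable (g r lam · x) :=
  (summable_nat_add_iff 0).1 (summable_g_add hr hlam hx hlx 0)

theorem tsum_g_add_succ_le (hr : 0 < r) (hlam : 0 ≤ lam) (hx : 0 < x) (hlx : lam * x < 1)
    (n : ℕ) :
    ∑' k, g r lam (k + (n + 1)) x ≤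
      g r lam n x * (r * (1 - lam * x) / ((n + 1 + r * lam) * x)) := by
  have hsplit : ∑' k, g r lam (k + n) x = g r lam n x + ∑' k, g r lam (k + (n + 1)) x := by
    rw [(summable_g_add hr hlam hx hlx n).tsum_eq_zero_add]
    simp only [zero_add, add_right_comm _ 1 n, add_assoc]
  have hbound := tsum_le_div_of_succ_le_mul (u := fun k => g r lam (k + n) x)
    (fun _ => (g_pos hr hx hlx _).le) (g_ratio_nonneg hr hx.le hlx n)
    (g_ratio_lt_one hr hlam hx n) (g_add_succ_le_mul hr hx hlx n)
  simp only [one_sub_g_ratio hr hx.le, zero_add] at hbound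
  have : r + ((n : ℝ) + 1) * x ≠ 0 := by positivity
  have : ((n : ℝ) + 1 + r * lam) * x ≠ 0 := by positivity
  calc ∑' k, g r lam (k + (n + 1)) x
      ≤ g r lam n x / ((n + 1 + r * lam) * x / (r + (n + 1) * x)) - g r lam n x := by linarith
    _ = g r lam n x * (r * (1 - lam * x) / ((n + 1 + r * lam) * x)) := by
      field_simp
      ring

end Terms

theorem f_sub_sum_range_eq_tsum {r lam x : ℝ} (hsum : Summable (g r lam · x)) (n : ℕ) :
    f r lam x - ∑ i ∈ Finset.range n, g r lam i x = ∑' k, g r lam (k + n) x := by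
  rw [f, ← hsum.sum_add_tsum_nat_add n, add_sub_cancel_left]

theorem stmt7_general (r lam p₀ : ℝ) (hr : 0 < r) (hlam : lam ∈ Set.Ioo (0:ℝ) 1)
    (hp : p₀ ∈ Set.Ioo (0:ℝ) 1) (n : ℕ) :
    0 < f r lam p₀ - ∑ i ∈ Finset.range (n + 1), g r lam i p₀ ∧
      f r lam p₀ - ∑ i ∈ Finset.range (n + 1), g r lam i p₀ <
        g r lam n p₀ * (r * (1 - lam * p₀) / (((n : ℝ) + r * lam) * p₀)) := by
  obtain ⟨hlam0, hlam1⟩ := hlam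
  obtain ⟨hp0, hp1⟩ := hp
  have hlp : lam * p₀ < 1 := by nlinarith
  have hg := g_pos hr hp0 hlp
  rw [f_sub_sum_range_eq_tsum (summable_g hr hlam0.le hp0 hlp)]
  refine ⟨(summable_g_add hr hlam0.le hp0 hlp (n + 1)).tsum_pos (fun _ => (hg _).le) 0 (hg _),
    (tsum_g_add_succ_le hr hlam0.le hp0 hlp n).trans_lt ?_⟩
  have : 0 < 1 - lam * p₀ := sub_pos.2 hlp
  gcongr
  · exact hg n
  · linarith

theorem stmt7 (r lam p₀ : ℝ) (hr : 0 < r) (hlam : lam ∈ Set.Ioo (0:ℝ) 1)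
    (hp : p₀ ∈ Set.Ioo (0:ℝ) 1) (n : ℕ) (hn : 1 ≤ n) :
    0 < f r lam p₀ - ∑ i ∈ Finset.range (n + 1), g r lam i p₀ ∧
      f r lam p₀ - ∑ i ∈ Finset.range (n + 1), g r lam i p₀ <
        g r lam n p₀ * (r * (1 - lam * p₀) / (((n : ℝ) + r * lam) * p₀)) :=
  stmt7_general r lam p₀ hr hlam hp n
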